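/- Define g(x) = ⌊(x+24)/13⌋. If u is a factor of f^ω(0) and g^t(|u|) ≤ 2, then u is equivalent under the cyclic shift σ to a factor of the prefix of f^ω(0) of length 13^t·11. -/

import Mathlib

/-- The image of 0 under the morphism: 0740103050260. -/
def f0 : List (Fin 8) := [0,7,4,0,1,0,3,0,5,0,2,6,0]

/-- The cyclic shift morphism σ, sending each letter a to a+1 (mod 8). -/
def sigmaW (w : List (Fin 8)) : List (Fin 8) := w.map (· + 1)

/-- The image of a letter under the cyclic morphism f: f(a) = σ^a(f(0)). -/
def fL (a : Fin 8) : List (Fin 8) := f0.map (· + a)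

/-- The morphism f extended to words. -/
def fW (w : List (Fin 8)) : List (Fin 8) := w.flatMap fL

/-- f^n(0). -/
def fIter (n : ℕ) : List (Fin 8) := fW^[n] [0]

/-- u is a factor of the fixed point f^ω(0): since f^n(0) is a prefix of
f^{n+1}(0), this holds iff u is a factor of some f^n(0). -/
def FactorFP (u : List (Fin 8)) : Prop := ∃ n, u <:+: fIter n

/-- A letter of Σ ∪ {ε} viewed as a word. -/
def optL (a : Option (Fin 8)) : List (Fin 8) := a.elim [] (fun x => [x])

/-- The image under f of an element of Σ ∪ {ε}. -/
def imgF (a : Option (Fin 8)) : List (Fin 8) := a.elim [] fL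

/-- g(x) = ⌊(x+24)/13⌋. -/
def g (x : ℕ) : ℕ := (x + 24) / 13

/-!
The images of the letters under `f` all have length 13, so a factor `u` of `f(w)` only meets the
images of a factor `w'` of `w` with `13 |w'| ≤ |u| + 24`, i.e. `|w'| ≤ g |u|`. Iterating this
`t` times reduces `u` to a factor of length at most 2, whose letters differ by an element of
`{1, 2, 3, 4, 5, 7}` (the set of consecutive differences in `f(0)` is closed under applying `f`,
since `f(a)` begins and ends with `a`); all these occur, up to shift, in the prefix of length 11.
Since `f` commutes with the shift and `f` maps the prefix of length `L` to that of length `13 L`,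
the factor is pulled back up through the `t` steps.
-/

open List

theorem infix_drop_take_append {α : Type*} {s u t : List α} {i j : ℕ} (hi : i ≤ s.length)
    (hj : s.length + u.length ≤ j) : u <:+: ((s ++ u ++ t).take j).drop i := by
  have hsu : s ++ u <+: (s ++ u ++ t).take j :=
    prefix_take_iff.mpr ⟨prefix_append _ _, by simpa using hj⟩
  have hdrop := hsu.drop i
  rw [drop_append_of_le_length hi] at hdrop
  exact (suffix_append _ _).isInfix.trans hdrop.isInfix

section UniformMorphism

variable {α β : Type*} {φ : α → List β} {k : ℕ}

theorem length_flatMap_of_forall_length_eq (hφ : ∀ a, (φ a).length = k) (w : List α) :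
    (w.flatMap φ).length = k * w.length := by
  induction w with
  | nil => simp
  | cons a w ih => simp [hφ, ih, Nat.mul_succ, Nat.add_comm]

theorem take_flatMap_of_forall_length_eq (hφ : ∀ a, (φ a).length = k) (w : List α) (n : ℕ) :
    (w.flatMap φ).take (k * n) = (w.take n).flatMap φ := by
  induction w generalizing n with
  | nil => simp
  | cons a w ih => cases n <;> simp [take_append, hφ, Nat.mul_succ, ih]

theorem drop_flatMap_of_forall_length_eq (hφ : ∀ a, (φ a).length = k) (w : List α) (n : ℕ) :
    (w.flatMap φ).drop (k * n) = (w.drop n).flatMap φ := by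
  induction w generalizing n with
  | nil => simp
  | cons a w ih => cases n <;> simp [drop_append, hφ, Nat.mul_succ, ih]

end UniformMorphism

theorem length_fL (a : Fin 8) : (fL a).length = 13 := by simp [fL, f0]

theorem fW_append (v w : List (Fin 8)) : fW (v ++ w) = fW v ++ fW w := flatMap_append

theorem length_fW (w : List (Fin 8)) : (fW w).length = 13 * w.length :=
  length_flatMap_of_forall_length_eq length_fL w

theorem fW_take (w : List (Fin 8)) (n : ℕ) : fW (w.take n) = (fW w).take (13 * n) :=
  (take_flatMap_of_forall_length_eq length_fL w n).symm

theorem fW_drop (w : List (Fin 8)) (n : ℕ) : fW (w.drop n) = (fW w).drop (13 * n) :=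
  (drop_flatMap_of_forall_length_eq length_fL w n).symm

theorem fW_prefix_fW {v w : List (Fin 8)} (h : v <+: w) : fW v <+: fW w := by
  obtain ⟨t, rfl⟩ := h
  exact ⟨fW t, (fW_append v t).symm⟩

theorem fW_infix_fW {v w : List (Fin 8)} (h : v <:+: w) : fW v <:+: fW w := by
  obtain ⟨s, t, rfl⟩ := h
  exact ⟨fW s, fW t, by rw [fW_append, fW_append]⟩

theorem fW_map_add (c : Fin 8) (w : List (Fin 8)) : fW (w.map (· + c)) = (fW w).map (· + c) := by
  simp only [fW, fL, flatMap_map, map_flatMap, map_map]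
  congr! 2 with a x
  simp

theorem fIter_succ (n : ℕ) : fIter (n + 1) = fW (fIter n) :=
  Function.iterate_succ_apply' fW n [0]

theorem fIter_prefix_fIter_succ (n : ℕ) : fIter n <+: fIter (n + 1) := by
  induction n with
  | zero => decide
  | succ n ih => rw [fIter_succ, fIter_succ]; exact fW_prefix_fW ih

theorem fIter_prefix_fIter {m n : ℕ} (h : m ≤ n) : fIter m <+: fIter n := by
  induction n, h using Nat.le_induction with
  | base => exact prefix_rfl
  | succ n _ ih => exact ih.trans (fIter_prefix_fIter_succ n)

theorem length_fIter (n : ℕ) : (fIter n).length = 13 ^ n := by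
  induction n with
  | zero => rfl
  | succ n ih => rw [fIter_succ, length_fW, ih, pow_succ, Nat.mul_comm]

theorem take_fIter_eq {m n L : ℕ} (hm : L ≤ 13 ^ m) (hn : L ≤ 13 ^ n) :
    (fIter m).take L = (fIter n).take L := by
  wlog h : m ≤ n generalizing m n
  · exact (this hn hm (le_of_not_ge h)).symm
  obtain ⟨c, hc⟩ := fIter_prefix_fIter h
  rw [← hc, take_append_of_le_length (by rwa [length_fIter])]

theorem take_fIter_eleven : (fIter 11).take 11 = [0, 7, 4, 0, 1, 0, 3, 0, 5, 0, 2] := by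
  rw [take_fIter_eq (n := 1) (by norm_num) (by norm_num)]
  decide

theorem fW_take_fIter_self (L : ℕ) : fW ((fIter L).take L) = (fIter (13 * L)).take (13 * L) := by
  rw [fW_take, ← fIter_succ]
  have hL : L ≤ 13 ^ L := (Nat.lt_pow_self (by norm_num)).le
  exact take_fIter_eq (by rw [pow_succ']; exact Nat.mul_le_mul_left 13 hL)
    (Nat.lt_pow_self (by norm_num)).le

theorem monotone_g : Monotone g := fun _ _ h => Nat.div_le_div_right (Nat.add_le_add_right h 24)

theorem infix_fW_of_infix_fW {u w : List (Fin 8)} (h : u <:+: fW w) :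
    ∃ w', w' <:+: w ∧ u <:+: fW w' ∧ w'.length ≤ g u.length := by
  obtain ⟨s, t, hst⟩ := h
  set a := s.length / 13
  set b := (s.length + u.length + 12) / 13
  refine ⟨(w.take b).drop a, (drop_suffix _ _).isInfix.trans (take_prefix _ _).isInfix, ?_, ?_⟩
  · rw [fW_drop, fW_take, ← hst]
    exact infix_drop_take_append (by omega) (by omega)
  · have : ((w.take b).drop a).length ≤ b - a := by simp; omega
    unfold g
    omega

theorem FactorFP.exists_infix_fW {u : List (Fin 8)} (hu : FactorFP u) :
    ∃ u', FactorFP u' ∧ u <:+: fW u' ∧ u'.length ≤ g u.length := by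
  obtain ⟨n, hn⟩ := hu
  have hn' : u <:+: fW (fIter n) := fIter_succ n ▸ hn.trans (fIter_prefix_fIter_succ n).isInfix
  obtain ⟨u', hu', hu, hlen⟩ := infix_fW_of_infix_fW hn'
  exact ⟨u', ⟨n, hu'⟩, hu, hlen⟩

def AllowedStep (x y : Fin 8) : Prop := y - x ≠ 0 ∧ y - x ≠ 6

instance : DecidableRel AllowedStep := fun _ _ => instDecidableAnd

theorem allowedStep_add_right {x y : Fin 8} (c : Fin 8) :
    AllowedStep (x + c) (y + c) ↔ AllowedStep x y := by
  simp only [AllowedStep, add_sub_add_right_eq_sub]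

theorem isChain_fL (a : Fin 8) : IsChain AllowedStep (fL a) := by
  have hf0 : IsChain AllowedStep f0 := by decide
  simpa only [fL, isChain_map, allowedStep_add_right] using hf0

theorem isChain_fW {w : List (Fin 8)} (hw : IsChain AllowedStep w) :
    IsChain AllowedStep (fW w) := by
  have hne : [] ∉ w.map fL := by simp [fL, f0]
  rw [fW, flatMap_def, isChain_flatten hne, isChain_map]
  refine ⟨by simpa using fun a _ => isChain_fL a, hw.imp fun a b hab => ?_⟩
  simpa [fL, f0] using hab

theorem isChain_fIter (n : ℕ) : IsChain AllowedStep (fIter n) := by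
  induction n with
  | zero => exact isChain_singleton 0
  | succ n ih => exact fIter_succ n ▸ isChain_fW ih

def IsShiftedInfix (u w : List (Fin 8)) : Prop := ∃ c : Fin 8, ∃ v, v <:+: w ∧ u = v.map (· + c)

theorem IsShiftedInfix.of_infix_fW {u u' w : List (Fin 8)} (hu' : IsShiftedInfix u' w)
    (hu : u <:+: fW u') : IsShiftedInfix u (fW w) := by
  obtain ⟨c, v', hv', rfl⟩ := hu'
  rw [fW_map_add] at hu
  obtain ⟨v, hv, rfl⟩ := infix_map_iff.mp hu
  exact ⟨c, v, hv.trans (fW_infix_fW hv'), rfl⟩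

theorem isShiftedInfix_of_isChain_of_length_le_two {u : List (Fin 8)}
    (hu : IsChain AllowedStep u) (hlen : u.length ≤ 2) :
    IsShiftedInfix u [0, 7, 4, 0, 1, 0, 3, 0, 5, 0, 2] := by
  match u, hu, hlen with
  | [], _, _ => exact ⟨0, [], nil_infix, rfl⟩
  | [x], _, _ => exact ⟨x, [0], by decide, by simp⟩
  | [x, y], hxy, _ =>
    have hpairs : ∀ x y : Fin 8, AllowedStep x y →
        ∃ c : Fin 8, [x - c, y - c] <:+: [0, 7, 4, 0, 1, 0, 3, 0, 5, 0, 2] := by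
      decide
    obtain ⟨c, hc⟩ := hpairs x y (isChain_pair.mp hxy)
    exact ⟨c, _, hc, by simp⟩

open scoped Fin.NatCast in
theorem sigmaW_iterate (i : ℕ) (w : List (Fin 8)) : sigmaW^[i] w = w.map (· + (i : Fin 8)) := by
  induction i with
  | zero => simp
  | succ i ih =>
    rw [Function.iterate_succ_apply', ih, sigmaW, map_map]
    congr 1
    funext x
    simp [add_assoc]

theorem stmt11 (t : ℕ) (u : List (Fin 8))
    (hfac : FactorFP u) (hg : g^[t] u.length ≤ 2) :
    ∃ v : List (Fin 8), v <:+: (fIter (13 ^ t * 11)).take (13 ^ t * 11) ∧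
      ∃ i : ℕ, u = sigmaW^[i] v := by
  suffices IsShiftedInfix u ((fIter (13 ^ t * 11)).take (13 ^ t * 11)) by
    obtain ⟨c, v, hv, rfl⟩ := this
    exact ⟨v, hv, c.val, by rw [sigmaW_iterate]; simp⟩
  induction t generalizing u with
  | zero =>
    rw [pow_zero, one_mul, take_fIter_eleven]
    obtain ⟨n, hn⟩ := hfac
    exact isShiftedInfix_of_isChain_of_length_le_two ((isChain_fIter n).infix hn) hg
  | succ t ih =>
    obtain ⟨u', hu', hu, hlen⟩ := hfac.exists_infix_fW
    have hg' : g^[t] u'.length ≤ 2 :=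
      ((monotone_g.iterate t) hlen).trans (Function.iterate_succ_apply g t _ ▸ hg)
    rw [pow_succ, mul_right_comm, mul_comm _ 13, ← fW_take_fIter_self]
    exact (ih u' hu' hg').of_infix_fW hu
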